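/- arXiv:1602.03647 — 3 statements merged into one kernel-verified Lean document; each statement's English description precedes it below -/
import Mathlib

section
/- Let G and G' be simple graphs on vertex set {1,…,p} with edge sets E and E' respectively. Then the Kullback–Leibler divergence between the corresponding Ising distributions satisfies D(P_G‖P_{G'}) ≤ Σ_{(i,j)∈E\E'} λ·(E_G[X_i X_j] − E_{G'}[X_i X_j]) + Σ_{(i,j)∈E'\E} λ·(E_{G'}[X_i X_j] − E_G[X_i X_j]). -/
open Real Finset
open scoped Classical

noncomputable section

/-- Value of a spin: `true ↦ +1`, `false ↦ -1`. -/
def confVal (b : Bool) : ℝ := if b then 1 else -1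

/-- The Ising interaction `∑_{{i,j}∈E} x_i x_j` (each edge counted once). -/
def isingEnergy {p : ℕ} (G : SimpleGraph (Fin p)) (x : Fin p → Bool) : ℝ :=
  (1 / 2) * ∑ i : Fin p, ∑ j : Fin p,
    if G.Adj i j then confVal (x i) * confVal (x j) else 0

/-- The partition function `Z_G`. -/
def isingZ {p : ℕ} (lam : ℝ) (G : SimpleGraph (Fin p)) : ℝ :=
  ∑ x : Fin p → Bool, Real.exp (lam * isingEnergy G x)

/-- The ferromagnetic Ising distribution `P_G(x)`. -/
def isingP {p : ℕ} (lam : ℝ) (G : SimpleGraph (Fin p)) (x : Fin p → Bool) : ℝ :=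
  Real.exp (lam * isingEnergy G x) / isingZ lam G

/-- Kullback–Leibler divergence `D(P_G ‖ P_{G'})`. -/
def isingKL {p : ℕ} (lam : ℝ) (G G' : SimpleGraph (Fin p)) : ℝ :=
  ∑ x : Fin p → Bool, isingP lam G x * Real.log (isingP lam G x / isingP lam G' x)

/-- The correlation `E_G[X_i X_j]`. -/
def isingCorr {p : ℕ} (lam : ℝ) (G : SimpleGraph (Fin p)) (i j : Fin p) : ℝ :=
  ∑ x : Fin p → Bool, isingP lam G x * (confVal (x i) * confVal (x j))

/-- Probability of an event under `P_G`. -/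
def eventProb {p : ℕ} (lam : ℝ) (G : SimpleGraph (Fin p)) (S : Set (Fin p → Bool)) : ℝ :=
  ∑ x : Fin p → Bool, if x ∈ S then isingP lam G x else 0

/-- `P_G[X_i = X_j]`. -/
def isingProbEq {p : ℕ} (lam : ℝ) (G : SimpleGraph (Fin p)) (i j : Fin p) : ℝ :=
  eventProb lam G {x | x i = x j}

/-- The edge set of `G` as a `Finset`. -/
def edgeFin {p : ℕ} (G : SimpleGraph (Fin p)) : Finset (Sym2 (Fin p)) :=
  (Set.toFinite G.edgeSet).toFinset

/-- The edit distance `|E Δ E'|` between two graphs. -/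
def editDist {p : ℕ} (G G' : SimpleGraph (Fin p)) : ℕ :=
  ((edgeFin G \ edgeFin G') ∪ (edgeFin G' \ edgeFin G)).card

/-- The correlation `E_G[X_i X_j]` as a function of the unordered pair `{i,j}`. -/
def corrSym2 {p : ℕ} (lam : ℝ) (G : SimpleGraph (Fin p)) : Sym2 (Fin p) → ℝ :=
  Sym2.lift ⟨fun i j => isingCorr lam G i j, fun i j => by
    unfold isingCorr
    exact Finset.sum_congr rfl fun x _ => by ring⟩

/-!
Adding the reverse divergence, which is nonnegative by Gibbs' inequality, bounds `D(P_G‖P_{G'})`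
by `∑ₓ (P_G x - P_{G'} x) log (P_G x / P_{G'} x)`. The log-ratio is `λ (H_G x - H_{G'} x)` plus a
constant coming from the partition functions, and the constant drops out because both
distributions have mass one. Finally `H_G - H_{G'}` is the sum of the spin products over `E \ E'`
minus the sum over `E' \ E`, whose expectations are the correlations.
-/

namespace SimpleGraph

variable {V M : Type*} [Fintype V] [AddCommMonoid M] (G : SimpleGraph V) [DecidableRel G.Adj]

theorem sum_dart_edge (f : Sym2 V → M) :
    ∑ d : G.Dart, f d.edge = 2 • ∑ e ∈ G.edgeFinset, f e := by
  rw [← sum_fiberwise_of_maps_to (t := G.edgeFinset) (g := Dart.edge)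
    (fun d _ => G.mem_edgeFinset.2 d.edge_mem), smul_sum]
  refine sum_congr rfl fun e he => ?_
  rw [sum_congr rfl fun d hd => congrArg f (mem_filter.1 hd).2, sum_const,
    G.dart_edge_fiber_card e (G.mem_edgeFinset.1 he)]

theorem sum_sum_ite_adj (f : Sym2 V → M) :
    ∑ v, ∑ w, (if G.Adj v w then f s(v, w) else 0) = 2 • ∑ e ∈ G.edgeFinset, f e := by
  rw [← G.sum_dart_edge, ← Fintype.sum_prod_type', ← sum_filter]
  exact sum_bij' (fun p hp => ⟨p, (mem_filter.1 hp).2⟩) (fun d _ => d.toProd)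
    (by simp) (fun d _ => by simp [d.adj]) (by simp) (by simp) (by simp)

end SimpleGraph

section Gibbs

variable {α : Type*} [Fintype α] {P Q : α → ℝ}

theorem sum_mul_log_div_le_sum_sub_mul_log_div (hP : ∀ x, 0 < P x) (hQ : ∀ x, 0 < Q x)
    (hPQ : ∑ x, P x = ∑ x, Q x) :
    ∑ x, P x * log (P x / Q x) ≤ ∑ x, (P x - Q x) * log (P x / Q x) := by
  have hterm : ∀ x, Q x * log (P x / Q x) ≤ P x - Q x := fun x => calc
    Q x * log (P x / Q x) ≤ Q x * (P x / Q x - 1) :=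
      mul_le_mul_of_nonneg_left (log_le_sub_one_of_pos (div_pos (hP x) (hQ x))) (hQ x).le
    _ = P x - Q x := by field_simp [(hQ x).ne']
  have hsum := sum_le_sum fun x (_ : x ∈ univ) => hterm x
  rw [sum_sub_distrib, hPQ, sub_self] at hsum
  simp only [sub_mul, sum_sub_distrib]
  linarith

end Gibbs

section Ising

variable {p : ℕ} (lam : ℝ) (G G' : SimpleGraph (Fin p))

def spinProd (x : Fin p → Bool) : Sym2 (Fin p) → ℝ :=
  Sym2.lift ⟨fun i j => confVal (x i) * confVal (x j), fun _ _ => mul_comm _ _⟩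

theorem edgeFin_eq_edgeFinset : edgeFin G = G.edgeFinset := by
  ext; simp [edgeFin]

theorem isingEnergy_eq_sum_spinProd (x : Fin p → Bool) :
    isingEnergy G x = ∑ e ∈ edgeFin G, spinProd x e := by
  have h := G.sum_sum_ite_adj (spinProd x)
  rw [isingEnergy, edgeFin_eq_edgeFinset]
  simp only [spinProd, Sym2.lift_mk, nsmul_eq_mul] at h ⊢
  rw [h]
  ring

theorem isingEnergy_sub_isingEnergy (x : Fin p → Bool) :
    isingEnergy G x - isingEnergy G' x =
      ∑ e ∈ edgeFin G \ edgeFin G', spinProd x e - ∑ e ∈ edgeFin G' \ edgeFin G, spinProd x e := by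
  rw [isingEnergy_eq_sum_spinProd, isingEnergy_eq_sum_spinProd, sum_sdiff_sub_sum_sdiff]

theorem isingZ_pos : 0 < isingZ lam G :=
  sum_pos (fun _ _ => exp_pos _) univ_nonempty

theorem isingP_pos (x : Fin p → Bool) : 0 < isingP lam G x :=
  div_pos (exp_pos _) (isingZ_pos lam G)

theorem sum_isingP : ∑ x, isingP lam G x = 1 := by
  unfold isingP
  rw [← sum_div]
  exact div_self (isingZ_pos lam G).ne'

theorem log_isingP_div_isingP (x : Fin p → Bool) :
    log (isingP lam G x / isingP lam G' x) =
      lam * (isingEnergy G x - isingEnergy G' x) + log (isingZ lam G' / isingZ lam G) := by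
  have hZ := isingZ_pos lam G
  have hZ' := isingZ_pos lam G'
  rw [isingP, isingP, div_div_div_comm, ← exp_sub, div_eq_mul_inv _ (isingZ lam G / _), inv_div,
    log_mul (exp_pos _).ne' (by positivity), log_exp, mul_sub]

theorem sum_sub_mul_log_isingP_div_isingP :
    ∑ x, (isingP lam G x - isingP lam G' x) * log (isingP lam G x / isingP lam G' x) =
      lam * ∑ x, (isingP lam G x - isingP lam G' x) * (isingEnergy G x - isingEnergy G' x) := by
  simp only [log_isingP_div_isingP, mul_add, sum_add_distrib, ← sum_mul, sum_sub_distrib,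
    sum_isingP, sub_self, zero_mul, add_zero, mul_sum]
  exact sum_congr rfl fun x _ => by ring

theorem corrSym2_eq_sum (e : Sym2 (Fin p)) :
    corrSym2 lam G e = ∑ x, isingP lam G x * spinProd x e := by
  induction e using Sym2.ind
  rfl

theorem sum_corrSym2_sub_corrSym2 (D : Finset (Sym2 (Fin p))) :
    ∑ e ∈ D, (corrSym2 lam G e - corrSym2 lam G' e) =
      ∑ x, (isingP lam G x - isingP lam G' x) * ∑ e ∈ D, spinProd x e := by
  simp only [corrSym2_eq_sum, ← sum_sub_distrib, ← sub_mul, mul_sum]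
  exact sum_comm

end Ising

theorem kl_le_corr_diff_general {p : ℕ} (lam : ℝ)
    (G G' : SimpleGraph (Fin p)) :
    isingKL lam G G' ≤
      (∑ e ∈ edgeFin G \ edgeFin G', lam * (corrSym2 lam G e - corrSym2 lam G' e)) +
      (∑ e ∈ edgeFin G' \ edgeFin G, lam * (corrSym2 lam G' e - corrSym2 lam G e)) := by
  calc isingKL lam G G'
      ≤ ∑ x, (isingP lam G x - isingP lam G' x) * log (isingP lam G x / isingP lam G' x) :=
        sum_mul_log_div_le_sum_sub_mul_log_div (isingP_pos lam G) (isingP_pos lam G')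
          (by rw [sum_isingP, sum_isingP])
    _ = lam * ∑ x, (isingP lam G x - isingP lam G' x) * (isingEnergy G x - isingEnergy G' x) :=
        sum_sub_mul_log_isingP_div_isingP lam G G'
    _ = _ := by
        rw [← mul_sum, ← mul_sum, sum_corrSym2_sub_corrSym2, sum_corrSym2_sub_corrSym2, ← mul_add,
          ← sum_add_distrib]
        refine congrArg (lam * ·) (sum_congr rfl fun x _ => ?_)
        rw [isingEnergy_sub_isingEnergy]
        ring

/-- KL divergence bound in terms of correlation differences over
the edges of the symmetric difference. -/
theorem kl_le_corr_diff {p : ℕ} (lam : ℝ) (hlam : 0 < lam)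
    (G G' : SimpleGraph (Fin p)) :
    isingKL lam G G' ≤
      (∑ e ∈ edgeFin G \ edgeFin G', lam * (corrSym2 lam G e - corrSym2 lam G' e)) +
      (∑ e ∈ edgeFin G' \ edgeFin G, lam * (corrSym2 lam G' e - corrSym2 lam G e)) :=
  kl_le_corr_diff_general lam G G'

end
end

section
/- Let G be a simple graph on vertex set {1,…,p} containing an edge (i,j), and let G' be the graph obtained from G by removing the single edge (i,j). Then the Kullback–Leibler divergence between the corresponding Ising distributions satisfies D(P_G‖P_{G'}) ≤ λ·tanh(λ). -/
set_option maxHeartbeats 1000000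


open Real Finset
open scoped Classical

noncomputable section

-- auxiliary lemmas


lemma confVal_mul (a b : Bool) : confVal a * confVal b = 1 ∨ confVal a * confVal b = -1 := by
  cases a <;> cases b <;> simp [confVal]

lemma confVal_mul_self (a b : Bool) :
    (confVal a * confVal b) * (confVal a * confVal b) = 1 := by
  cases a <;> cases b <;> norm_num [confVal]

def monom {p : ℕ} (m : Fin p → ℕ) (x : Fin p → Bool) : ℝ := ∏ v, (confVal (x v)) ^ (m v)

lemma monom_add {p : ℕ} (m n : Fin p → ℕ) (x : Fin p → Bool) :
    monom (m + n) x = monom m x * monom n x := by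
  simp [monom, pow_add, Finset.prod_mul_distrib]

lemma monom_single {p : ℕ} (a : Fin p) (x : Fin p → Bool) :
    monom (Pi.single a 1) x = confVal (x a) := by
  unfold monom
  rw [Finset.prod_eq_single a]
  · simp
  · intro b _ hb; simp [Pi.single_apply, hb]
  · simp

lemma sum_monom_nonneg {p : ℕ} (m : Fin p → ℕ) : 0 ≤ ∑ x : Fin p → Bool, monom m x := by
  have h : ∏ v : Fin p, ∑ b : Bool, (confVal b) ^ (m v) = ∑ x : Fin p → Bool, monom m x := by
    rw [Finset.prod_univ_sum, Fintype.piFinset_univ]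
    rfl
  rw [← h]
  refine Finset.prod_nonneg fun v _ => ?_
  rw [Fintype.sum_bool]
  norm_num [confVal]
  rcases Nat.even_or_odd (m v) with he | ho
  · rw [he.neg_one_pow]; norm_num
  · rw [ho.neg_one_pow]; norm_num

lemma exists_monom {p : ℕ} (t : Finset (Fin p × Fin p)) :
    ∃ m : Fin p → ℕ, ∀ x : Fin p → Bool,
      (∏ e ∈ t, confVal (x e.1) * confVal (x e.2)) = monom m x := by
  induction t using Finset.induction with
  | empty => exact ⟨0, fun x => by simp [monom]⟩
  | @insert a s ha ih =>
    obtain ⟨m, hm⟩ := ih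
    refine ⟨Pi.single a.1 1 + (Pi.single a.2 1 + m), fun x => ?_⟩
    rw [Finset.prod_insert ha, hm x, monom_add, monom_add, monom_single, monom_single,
      mul_assoc]

lemma griffiths {p : ℕ} (lam : ℝ) (hlam : 0 ≤ lam) (H : SimpleGraph (Fin p)) (i j : Fin p) :
    0 ≤ ∑ x : Fin p → Bool,
      confVal (x i) * confVal (x j) * Real.exp (lam * isingEnergy H x) := by
  classical
  have hS : 0 ≤ Real.sinh (lam / 2) := by
    have : (0:ℝ) ≤ lam / 2 := by linarith
    calc (0:ℝ) ≤ lam / 2 := this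
    _ ≤ Real.sinh (lam / 2) := Real.self_le_sinh_iff.2 this
  have hC : 0 ≤ Real.cosh (lam / 2) := by
    have := Real.one_le_cosh (lam / 2); linarith
  have hE : ∀ x : Fin p → Bool, lam * isingEnergy H x
      = ∑ e ∈ Finset.univ.filter (fun e : Fin p × Fin p => H.Adj e.1 e.2),
          (lam / 2) * (confVal (x e.1) * confVal (x e.2)) := by
    intro x
    have h1 : isingEnergy H x = (1/2) *
        ∑ e ∈ (Finset.univ ×ˢ Finset.univ : Finset (Fin p × Fin p)),
          (if H.Adj e.1 e.2 then confVal (x e.1) * confVal (x e.2) else 0) := by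
      rw [isingEnergy, Finset.sum_product]
    rw [h1, Finset.univ_product_univ, Finset.sum_filter, Finset.mul_sum, Finset.mul_sum]
    refine Finset.sum_congr rfl fun e _ => ?_
    by_cases h : H.Adj e.1 e.2 <;> simp [h] <;> ring
  have hexp : ∀ x : Fin p → Bool, Real.exp (lam * isingEnergy H x)
      = ∏ e ∈ Finset.univ.filter (fun e : Fin p × Fin p => H.Adj e.1 e.2),
          (Real.sinh (lam/2) * (confVal (x e.1) * confVal (x e.2)) + Real.cosh (lam/2)) := by
    intro x
    rw [hE x, Real.exp_sum]
    refine Finset.prod_congr rfl fun e _ => ?_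
    rcases confVal_mul (x e.1) (x e.2) with h | h <;> rw [h]
    · rw [mul_one, mul_one, add_comm]
      exact (Real.cosh_add_sinh _).symm
    · have h2 : lam / 2 * (-1) = -(lam/2) := by ring
      rw [h2]
      have h3 := Real.cosh_sub_sinh (lam/2)
      linarith
  have hmono : ∀ t : Finset (Fin p × Fin p),
      0 ≤ ∑ x : Fin p → Bool, confVal (x i) * confVal (x j) *
          ∏ e ∈ t, (confVal (x e.1) * confVal (x e.2)) := by
    intro t
    obtain ⟨m, hm⟩ := exists_monom t
    have hx : ∀ x : Fin p → Bool, confVal (x i) * confVal (x j) *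
        ∏ e ∈ t, (confVal (x e.1) * confVal (x e.2))
        = monom (Pi.single i 1 + (Pi.single j 1 + m)) x := by
      intro x
      rw [hm x, monom_add, monom_add, monom_single, monom_single, mul_assoc]
    rw [Finset.sum_congr rfl fun x _ => hx x]
    exact sum_monom_nonneg _
  set E : Finset (Fin p × Fin p) := Finset.univ.filter (fun e : Fin p × Fin p => H.Adj e.1 e.2)
  have key : ∑ x : Fin p → Bool, confVal (x i) * confVal (x j) * Real.exp (lam * isingEnergy H x)
      = ∑ t ∈ E.powerset, (Real.sinh (lam/2) ^ t.card * Real.cosh (lam/2) ^ (E \ t).card) *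
          ∑ x : Fin p → Bool, confVal (x i) * confVal (x j) *
            ∏ e ∈ t, (confVal (x e.1) * confVal (x e.2)) := by
    have h1 : ∀ x : Fin p → Bool, confVal (x i) * confVal (x j) * Real.exp (lam * isingEnergy H x)
        = ∑ t ∈ E.powerset, (Real.sinh (lam/2) ^ t.card * Real.cosh (lam/2) ^ (E \ t).card) *
            (confVal (x i) * confVal (x j) * ∏ e ∈ t, (confVal (x e.1) * confVal (x e.2))) := by
      intro x
      rw [hexp x, Finset.prod_add, Finset.mul_sum]
      refine Finset.sum_congr rfl fun t _ => ?_
      rw [Finset.prod_mul_distrib, Finset.prod_const, Finset.prod_const]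
      ring
    rw [Finset.sum_congr rfl fun x _ => h1 x, Finset.sum_comm]
    refine Finset.sum_congr rfl fun t _ => ?_
    rw [Finset.mul_sum]
  rw [key]
  refine Finset.sum_nonneg fun t _ => ?_
  exact mul_nonneg (mul_nonneg (pow_nonneg hS _) (pow_nonneg hC _)) (hmono t)

lemma energy_del {p : ℕ} (G : SimpleGraph (Fin p)) (i j : Fin p) (hij : G.Adj i j)
    (x : Fin p → Bool) :
    isingEnergy G x
      = isingEnergy (G.deleteEdges {s(i,j)}) x + confVal (x i) * confVal (x j) := by
  classical
  have hne : i ≠ j := hij.ne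
  set c : ℝ := confVal (x i) * confVal (x j) with hc
  have key : ∀ u v : Fin p,
      (if G.Adj u v then confVal (x u) * confVal (x v) else 0)
      = (if (G.deleteEdges {s(i,j)}).Adj u v then confVal (x u) * confVal (x v) else 0)
        + ((if u = i ∧ v = j then c else 0) + (if u = j ∧ v = i then c else 0)) := by
    intro u v
    by_cases h1 : u = i ∧ v = j
    · obtain ⟨rfl, rfl⟩ := h1
      have hnd : ¬ (G.deleteEdges {s(u,v)}).Adj u v := by
        simp [SimpleGraph.deleteEdges_adj]
      have h2 : ¬ (u = v ∧ v = u) := fun h => hne h.1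
      simp [hnd, hij, h2, hc]
    · by_cases h2 : u = j ∧ v = i
      · obtain ⟨rfl, rfl⟩ := h2
        have hnd : ¬ (G.deleteEdges {s(v,u)}).Adj u v := by
          simp [SimpleGraph.deleteEdges_adj, Sym2.eq_swap]
        have h3 : ¬ (u = v ∧ v = u) := fun h => hne h.2
        simp [hnd, hij.symm, h3, hc, mul_comm]
      · have hns : ¬ (s(u,v) = s(i,j)) := by
          rw [Sym2.eq_iff]
          push_neg
          constructor
          · intro hu hv; exact h1 ⟨hu, hv⟩
          · intro hu hv; exact h2 ⟨hu, hv⟩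
        have hdel : (G.deleteEdges {s(i,j)}).Adj u v ↔ G.Adj u v := by
          simp [SimpleGraph.deleteEdges_adj, hns]
        simp [hdel, h1, h2]
  have s1 : ∑ u : Fin p, ∑ v : Fin p, (if u = i ∧ v = j then c else 0) = c := by
    simp [ite_and]
  have s2 : ∑ u : Fin p, ∑ v : Fin p, (if u = j ∧ v = i then c else 0) = c := by
    simp [ite_and]
  have hsum : ∑ u : Fin p, ∑ v : Fin p, (if G.Adj u v then confVal (x u) * confVal (x v) else 0)
      = (∑ u : Fin p, ∑ v : Fin p,
          (if (G.deleteEdges {s(i,j)}).Adj u v then confVal (x u) * confVal (x v) else 0))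
        + (c + c) := by
    calc ∑ u : Fin p, ∑ v : Fin p, (if G.Adj u v then confVal (x u) * confVal (x v) else 0)
        = ∑ u : Fin p, ∑ v : Fin p,
          ((if (G.deleteEdges {s(i,j)}).Adj u v then confVal (x u) * confVal (x v) else 0)
            + ((if u = i ∧ v = j then c else 0) + (if u = j ∧ v = i then c else 0))) :=
          Finset.sum_congr rfl fun u _ => Finset.sum_congr rfl fun v _ => key u v
      _ = _ := by
          simp only [Finset.sum_add_distrib]
          rw [s1, s2]
  rw [isingEnergy, isingEnergy, hsum]
  ring


/-- Removing a single edge changes the distribution by at most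
`λ tanh λ` in KL divergence. -/
theorem kl_single_edge_le {p : ℕ} (lam : ℝ) (hlam : 0 < lam)
    (G G' : SimpleGraph (Fin p)) (i j : Fin p) (hij : G.Adj i j)
    (hG' : G' = G.deleteEdges {s(i, j)}) :
    isingKL lam G G' ≤ lam * Real.tanh lam := by
  classical
  subst hG'
  set H := G.deleteEdges {s(i,j)} with hH
  set C := Real.cosh lam with hCdef
  set S := Real.sinh lam with hSdef
  set s : (Fin p → Bool) → ℝ := fun x => confVal (x i) * confVal (x j) with hsdef
  set Z' := isingZ lam H with hZ'def
  set W : ℝ := ∑ x : Fin p → Bool, s x * Real.exp (lam * isingEnergy H x) with hWdef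
  have hsx : ∀ x, s x = 1 ∨ s x = -1 := fun x => confVal_mul _ _
  have hs2 : ∀ x, s x * s x = 1 := fun x => confVal_mul_self _ _
  have hZ'pos : 0 < Z' := Finset.sum_pos (fun y _ => Real.exp_pos _) Finset.univ_nonempty
  have hW0 : 0 ≤ W := griffiths lam hlam.le H i j
  have hClam : 1 ≤ C := Real.one_le_cosh lam
  have hSpos : 0 < S := by
    rw [hSdef]
    calc (0:ℝ) < lam := hlam
    _ ≤ Real.sinh lam := Real.self_le_sinh_iff.2 hlam.le
  have hWle : W ≤ Z' := by
    rw [hWdef, hZ'def, isingZ]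
    refine Finset.sum_le_sum fun x _ => ?_
    have hs1 : s x ≤ 1 := by rcases hsx x with h | h <;> rw [h] <;> norm_num
    have := Real.exp_pos (lam * isingEnergy H x)
    nlinarith
  have hexp_s : ∀ x : Fin p → Bool, Real.exp (lam * isingEnergy G x)
      = Real.exp (lam * isingEnergy H x) * (C + S * s x) := by
    intro x
    rw [energy_del G i j hij x, mul_add, Real.exp_add]
    congr 1
    rcases hsx x with h | h
    · rw [show confVal (x i) * confVal (x j) = s x from rfl, h, mul_one, mul_one]
      exact (Real.cosh_add_sinh lam).symm
    · rw [show confVal (x i) * confVal (x j) = s x from rfl, h]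
      have h2 : lam * (-1) = -lam := by ring
      rw [h2]
      have h3 := Real.cosh_sub_sinh lam
      rw [hCdef, hSdef]
      linarith
  have hZ : isingZ lam G = C * Z' + S * W := by
    rw [isingZ]
    have h1 : ∀ x : Fin p → Bool, Real.exp (lam * isingEnergy G x)
        = C * Real.exp (lam * isingEnergy H x)
          + S * (s x * Real.exp (lam * isingEnergy H x)) := by
      intro x; rw [hexp_s x]; ring
    rw [Finset.sum_congr rfl fun x _ => h1 x, Finset.sum_add_distrib, ← Finset.mul_sum,
      ← Finset.mul_sum, hZ'def, isingZ, hWdef]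
  have hN : (∑ x : Fin p → Bool, s x * Real.exp (lam * isingEnergy G x)) = C * W + S * Z' := by
    have h1 : ∀ x : Fin p → Bool, s x * Real.exp (lam * isingEnergy G x)
        = C * (s x * Real.exp (lam * isingEnergy H x))
          + S * Real.exp (lam * isingEnergy H x) := by
      intro x
      rw [hexp_s x]
      linear_combination (Real.exp (lam * isingEnergy H x) * S) * hs2 x
    rw [Finset.sum_congr rfl fun x _ => h1 x, Finset.sum_add_distrib, ← Finset.mul_sum,
      ← Finset.mul_sum, hZ'def, isingZ, hWdef]
  set A : ℝ := C * Z' + S * W with hAdef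
  have hApos : 0 < A := by nlinarith
  have hZpos : 0 < isingZ lam G := by rw [hZ]; exact hApos
  -- the KL formula
  have hKL : isingKL lam G H = lam * ((C * W + S * Z') / A) + (Real.log Z' - Real.log A) := by
    rw [isingKL]
    have hterm : ∀ x : Fin p → Bool,
        isingP lam G x * Real.log (isingP lam G x / isingP lam H x)
        = lam * ((s x * Real.exp (lam * isingEnergy G x)) / isingZ lam G)
          + (Real.log Z' - Real.log (isingZ lam G)) * (Real.exp (lam * isingEnergy G x) / isingZ lam G) := by
      intro x
      have hlog : Real.log (isingP lam G x / isingP lam H x)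
          = lam * s x + (Real.log Z' - Real.log (isingZ lam G)) := by
        rw [isingP, isingP, ← hZ'def]
        have hratio : Real.exp (lam * isingEnergy G x) / isingZ lam G
            / (Real.exp (lam * isingEnergy H x) / Z')
            = Real.exp (lam * isingEnergy G x - lam * isingEnergy H x) * (Z' / isingZ lam G) := by
          rw [Real.exp_sub]
          field_simp
        have hne1 : Real.exp (lam * isingEnergy G x - lam * isingEnergy H x) ≠ 0 :=
          (Real.exp_pos _).ne'
        have hne2 : Z' / isingZ lam G ≠ 0 := (div_pos hZ'pos hZpos).ne'
        rw [hratio, Real.log_mul hne1 hne2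
          , Real.log_exp, Real.log_div hZ'pos.ne' hZpos.ne']
        have hEd : lam * isingEnergy G x - lam * isingEnergy H x = lam * s x := by
          rw [energy_del G i j hij x, hsdef]; ring
        rw [hEd]
      rw [hlog, isingP]
      ring
    rw [Finset.sum_congr rfl fun x _ => hterm x, Finset.sum_add_distrib, ← Finset.mul_sum,
      ← Finset.mul_sum, ← Finset.sum_div, ← Finset.sum_div, hN]
    rw [show (∑ x : Fin p → Bool, Real.exp (lam * isingEnergy G x)) = isingZ lam G from rfl]
    rw [div_self hZpos.ne', mul_one, hZ]
  rw [hKL]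
  -- final inequality
  have hCpos : (0:ℝ) < C := lt_of_lt_of_le one_pos hClam
  have hC2 : C ^ 2 - S ^ 2 = 1 := Real.cosh_sq_sub_sinh_sq lam
  have hlamSC : lam ≤ S * C := by
    have h1 : lam ≤ S := Real.self_le_sinh_iff.2 hlam.le
    nlinarith
  have hACZ : A - C * Z' = S * W := by rw [hAdef]; ring
  -- log bound : log A - log Z' ≥ log C + S*W/A
  have hlogb : Real.log C + S * W / A ≤ Real.log A - Real.log Z' := by
    have hCZ' : C * Z' ≠ 0 := (mul_pos hCpos hZ'pos).ne'
    have hACZ' : A / (C * Z') ≠ 0 := (div_pos hApos (mul_pos hCpos hZ'pos)).ne'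
    have h1 : Real.log A - Real.log Z' = Real.log C + Real.log (A / (C * Z')) := by
      rw [← Real.log_div hApos.ne' hZ'pos.ne']
      rw [← Real.log_mul hCpos.ne' hACZ']
      congr 1
      field_simp
    rw [h1]
    have h2 : Real.log (C * Z' / A) ≤ C * Z' / A - 1 :=
      Real.log_le_sub_one_of_pos (div_pos (mul_pos hCpos hZ'pos) hApos)
    have h3 : Real.log (A / (C * Z')) = - Real.log (C * Z' / A) := by
      rw [Real.log_div hApos.ne' hCZ', Real.log_div hCZ' hApos.ne']
      ring
    have h4 : C * Z' / A - 1 = - (S * W / A) := by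
      field_simp
      linarith [hACZ]
    have h5 : -(C * Z' / A - 1) ≤ Real.log (A / (C * Z')) := by
      rw [h3]; linarith
    rw [h4] at h5
    linarith
  have e1 : lam * ((C * W + S * Z') / A) = lam * (S / C) + lam * W / (C * A) := by
    have h : C * W + S * Z' = (S * A + W) / C := by
      rw [eq_div_iff hCpos.ne', hAdef]
      linear_combination W * hC2
    rw [h]
    field_simp
  have e2 : lam * W / (C * A) ≤ S * W / A := by
    rw [div_le_div_iff₀ (mul_pos hCpos hApos) hApos]
    calc lam * W * A
        ≤ S * C * W * A := by
          nlinarith [mul_nonneg (mul_nonneg (sub_nonneg.mpr hlamSC) hW0) hApos.le]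
      _ = S * W * (C * A) := by ring
  have hlogC : 0 ≤ Real.log C := Real.log_nonneg hClam
  have htanh : Real.tanh lam = S / C := Real.tanh_eq_sinh_div_cosh lam
  rw [htanh, e1]
  linarith


end
end

section
/- Let m ≥ 2 and let G be the graph on vertex set {1,…,p} (p ≥ m) whose edge set is exactly all pairs within a fixed set of m vertices (a single m-clique and no other edges). Then for every edge (i,j) of the clique, E_G[X_i X_j] ≤ (e^{2λ} cosh(2λm) − 1) / (e^{2λ} cosh(2λm) + 1). -/
open Real Finset
open scoped Classical

noncomputable section

lemma confVal_sq (b : Bool) : confVal b * confVal b = 1 := by cases b <;> simp [confVal]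
lemma confVal_not (b : Bool) : confVal (!b) = - confVal b := by cases b <;> simp [confVal]
lemma confVal_abs (b : Bool) : |confVal b| = 1 := by cases b <;> simp [confVal]
lemma confVal_ne {a b : Bool} (h : a ≠ b) : confVal b = - confVal a := by
  cases a <;> cases b <;> simp_all [confVal]

lemma energy_clique {p m : ℕ} (C : Finset (Fin p)) (hC : C.card = m)
    (G : SimpleGraph (Fin p))
    (hG : ∀ a b, G.Adj a b ↔ a ≠ b ∧ a ∈ C ∧ b ∈ C)
    (x : Fin p → Bool) :
    isingEnergy G x = ((∑ v ∈ C, confVal (x v))^2 - m) / 2 := by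
  unfold isingEnergy
  have key : ∀ i j : Fin p, (if G.Adj i j then confVal (x i) * confVal (x j) else 0)
      = (if i ∈ C then confVal (x i) else 0) * (if j ∈ C then confVal (x j) else 0)
        - (if i ∈ C then (if j = i then (1:ℝ) else 0) else 0) := by
    intro i j
    by_cases hij : i = j
    · subst hij
      have : ¬ G.Adj i i := by simp [hG]
      by_cases hiC : i ∈ C <;> simp [this, hiC, confVal_sq]
    · have : G.Adj i j ↔ i ∈ C ∧ j ∈ C := by
        rw [hG]; simp [hij]
      by_cases hiC : i ∈ C <;> by_cases hjC : j ∈ C <;>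
        simp [this, hiC, hjC, Ne.symm hij]
  have h1 : ∑ i : Fin p, ∑ j : Fin p,
      (if G.Adj i j then confVal (x i) * confVal (x j) else 0)
      = (∑ v ∈ C, confVal (x v))^2 - m := by
    simp only [key, Finset.sum_sub_distrib]
    congr 1
    · rw [← Finset.sum_mul_sum]
      simp [Finset.sum_ite_mem, sq]
    · have : ∀ i : Fin p, ∑ j : Fin p, (if i ∈ C then (if j = i then (1:ℝ) else 0) else 0)
        = if i ∈ C then (1:ℝ) else 0 := by
        intro i
        by_cases hiC : i ∈ C <;> simp [hiC]
      simp [this, Finset.sum_ite_mem, hC]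
  rw [h1]; ring

lemma sum_flip {p : ℕ} (C : Finset (Fin p)) (x : Fin p → Bool) (i : Fin p) (hi : i ∈ C) :
    ∑ v ∈ C, confVal (Function.update x i (!(x i)) v)
      = (∑ v ∈ C, confVal (x v)) - 2 * confVal (x i) := by
  have h1 : ∑ v ∈ C, confVal (Function.update x i (!(x i)) v)
      = confVal (!(x i)) + ∑ v ∈ C.erase i, confVal (x v) := by
    rw [← Finset.add_sum_erase _ _ hi]
    congr 1
    · simp
    · exact Finset.sum_congr rfl fun v hv => by
        rw [Function.update_of_ne (Finset.ne_of_mem_erase hv)]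
  have h2 : ∑ v ∈ C, confVal (x v) = confVal (x i) + ∑ v ∈ C.erase i, confVal (x v) :=
    (Finset.add_sum_erase _ _ hi).symm
  rw [h1, h2, confVal_not]; ring


/-- Correlation upper bound inside a single `m`-clique. -/
theorem clique_corr_upper {p m : ℕ} (lam : ℝ) (hlam : 0 < lam)
    (hm : 2 ≤ m) (hmp : m ≤ p)
    (C : Finset (Fin p)) (hC : C.card = m)
    (G : SimpleGraph (Fin p))
    (hG : ∀ a b, G.Adj a b ↔ a ≠ b ∧ a ∈ C ∧ b ∈ C)
    (i j : Fin p) (hi : i ∈ C) (hj : j ∈ C) (hij : i ≠ j) :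
    isingCorr lam G i j ≤
      (Real.exp (2 * lam) * Real.cosh (2 * lam * m) - 1) /
      (Real.exp (2 * lam) * Real.cosh (2 * lam * m) + 1) := by
  set A : ℝ := Real.exp (2 * lam) * Real.cosh (2 * lam * m) with hA
  have hApos : 0 < A := mul_pos (Real.exp_pos _) (Real.cosh_pos _)
  -- weight
  set w : (Fin p → Bool) → ℝ := fun x => Real.exp (lam * isingEnergy G x) with hw
  have hwpos : ∀ x, 0 < w x := fun x => Real.exp_pos _
  set S : (Fin p → Bool) → ℝ := fun x => ∑ v ∈ C, confVal (x v) with hS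
  have hwform : ∀ x, w x = Real.exp (lam * (((S x)^2 - m) / 2)) := by
    intro x; simp only [hw]; rw [energy_clique C hC G hG x]
  have hSabs : ∀ x, |S x| ≤ m := by
    intro x
    calc |S x| ≤ ∑ v ∈ C, |confVal (x v)| := Finset.abs_sum_le_sum_abs _ _
    _ = m := by simp [confVal_abs, hC]
  -- flip map
  have flip_w : ∀ (k : Fin p), k ∈ C → ∀ x : Fin p → Bool,
      w (Function.update x k (!(x k)))
        = w x * Real.exp (2 * lam * (1 - S x * confVal (x k))) := by
    intro k hk x
    rw [hwform, hwform, ← Real.exp_add]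
    congr 1
    have hSy : S (Function.update x k (!(x k))) = S x - 2 * confVal (x k) :=
      sum_flip C x k hk
    rw [hSy]
    have hsq : confVal (x k) * confVal (x k) = 1 := confVal_sq _
    nlinarith [hsq]
  -- pairing inequality
  have pair_le : ∀ x : Fin p → Bool, x i ≠ x j →
      w (Function.update x i (!(x i))) + w (Function.update x j (!(x j)))
        ≤ 2 * A * w x := by
    intro x hne
    rw [flip_w i hi x, flip_w j hj x]
    have hτ : confVal (x j) = - confVal (x i) := confVal_ne hne
    rw [hτ]
    have hsum : Real.exp (2 * lam * (1 - S x * confVal (x i)))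
        + Real.exp (2 * lam * (1 - S x * (-confVal (x i))))
        = Real.exp (2 * lam) * (2 * Real.cosh (2 * lam * (S x * confVal (x i)))) := by
      rw [Real.cosh_eq]
      rw [show 2 * lam * (1 - S x * confVal (x i)) = 2 * lam + (- (2 * lam * (S x * confVal (x i)))) by ring,
        show 2 * lam * (1 - S x * (-confVal (x i))) = 2 * lam + 2 * lam * (S x * confVal (x i)) by ring,
        Real.exp_add, Real.exp_add]
      ring
    rw [← mul_add, hsum]
    have hcosh : Real.cosh (2 * lam * (S x * confVal (x i))) ≤ Real.cosh (2 * lam * m) := by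
      rw [Real.cosh_le_cosh]
      have hbd : |S x * confVal (x i)| ≤ (m:ℝ) := by
        rw [abs_mul, confVal_abs, mul_one]; exact hSabs x
      calc |2 * lam * (S x * confVal (x i))|
          = |2 * lam| * |S x * confVal (x i)| := abs_mul _ _
        _ ≤ |2 * lam| * (m:ℝ) := mul_le_mul_of_nonneg_left hbd (abs_nonneg _)
        _ = |2 * lam| * |(m:ℝ)| := by rw [Nat.abs_cast]
        _ = |2 * lam * m| := (abs_mul _ _).symm
    have hwx := (hwpos x).le
    calc w x * (Real.exp (2*lam) * (2 * Real.cosh (2 * lam * (S x * confVal (x i)))))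
        ≤ w x * (Real.exp (2*lam) * (2 * Real.cosh (2 * lam * m))) := by
          apply mul_le_mul_of_nonneg_left _ hwx
          apply mul_le_mul_of_nonneg_left _ (Real.exp_pos _).le
          linarith
      _ = 2 * A * w x := by rw [hA]; ring
  -- E and N
  set Feq : Finset (Fin p → Bool) := univ.filter (fun x => x i = x j) with hFeq
  set Fne : Finset (Fin p → Bool) := univ.filter (fun x => ¬ (x i = x j)) with hFne
  set E : ℝ := ∑ x ∈ Feq, w x with hE
  set N : ℝ := ∑ x ∈ Fne, w x with hN
  -- bijections
  have bij : ∀ (k l : Fin p), k ≠ l →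
      ∑ x ∈ univ.filter (fun x : Fin p → Bool => x k = x l), w x
        = ∑ x ∈ univ.filter (fun x : Fin p → Bool => ¬ x k = x l),
            w (Function.update x k (!(x k))) := by
    intro k l hkl
    apply Finset.sum_nbij' (fun x => Function.update x k (!(x k)))
      (fun x => Function.update x k (!(x k)))
    · intro x hx
      simp only [Finset.mem_filter, Finset.mem_univ, true_and] at hx ⊢
      rw [Function.update_self, Function.update_of_ne (Ne.symm hkl)]
      rw [← hx]; exact (Bool.not_ne_self _)
    · intro x hx
      simp only [Finset.mem_filter, Finset.mem_univ, true_and] at hx ⊢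
      rw [Function.update_self, Function.update_of_ne (Ne.symm hkl)]
      cases hxk : x k <;> cases hxl : x l <;> simp_all
    · intro x _
      simp [Function.update_idem, Function.update_self]
    · intro x _
      simp [Function.update_idem, Function.update_self]
    · intro x _
      simp [Function.update_idem, Function.update_self]
  have hENbound : E ≤ A * N := by
    have hEi : E = ∑ x ∈ Fne, w (Function.update x i (!(x i))) := by
      rw [hE, hFeq, hFne]; exact bij i j hij
    have hEj : E = ∑ x ∈ Fne, w (Function.update x j (!(x j))) := by
      rw [hE, hFeq, hFne]
      have hswap : (univ.filter (fun x : Fin p → Bool => x i = x j))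
          = univ.filter (fun x : Fin p → Bool => x j = x i) := by
        apply Finset.filter_congr; intro x _; simp [eq_comm]
      have hswap' : (univ.filter (fun x : Fin p → Bool => ¬ x i = x j))
          = univ.filter (fun x : Fin p → Bool => ¬ x j = x i) := by
        apply Finset.filter_congr; intro x _; simp [eq_comm]
      rw [hswap, hswap']
      exact bij j i (Ne.symm hij)
    have h2E : 2 * E = ∑ x ∈ Fne, (w (Function.update x i (!(x i))) + w (Function.update x j (!(x j)))) := by
      rw [Finset.sum_add_distrib, ← hEi, ← hEj]; ring
    have hle : ∑ x ∈ Fne, (w (Function.update x i (!(x i))) + w (Function.update x j (!(x j))))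
        ≤ ∑ x ∈ Fne, 2 * A * w x := by
      apply Finset.sum_le_sum
      intro x hx
      simp only [hFne, Finset.mem_filter, Finset.mem_univ, true_and] at hx
      exact pair_le x hx
    rw [← Finset.mul_sum, ← hN] at hle
    linarith [h2E ▸ hle]
  -- positivity
  have hNpos : 0 < N := by
    apply Finset.sum_pos (fun x _ => hwpos x)
    refine ⟨fun v => decide (v = i), ?_⟩
    simp only [hFne, Finset.mem_filter, Finset.mem_univ, true_and]
    simp [hij, Ne.symm hij]
  have hEpos : 0 < E := by
    apply Finset.sum_pos (fun x _ => hwpos x)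
    exact ⟨fun _ => true, by simp [hFeq]⟩
  -- corr = (E - N)/(E + N)
  have hZ : isingZ lam G = E + N := by
    rw [isingZ, hE, hN, hFeq, hFne]
    exact (Finset.sum_filter_add_sum_filter_not _ _ _).symm
  have hcorr : isingCorr lam G i j = (E - N) / (E + N) := by
    rw [isingCorr]
    have : ∀ x : Fin p → Bool, isingP lam G x * (confVal (x i) * confVal (x j))
        = (if x i = x j then w x else - w x) / (E + N) := by
      intro x
      rw [isingP, hZ]
      by_cases h : x i = x j
      · have : confVal (x i) * confVal (x j) = 1 := by rw [h]; exact confVal_sq _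
        rw [this, if_pos h]; ring
      · have : confVal (x i) * confVal (x j) = -1 := by
          rw [confVal_ne h]; cases x i <;> simp [confVal]
        rw [this, if_neg h]; ring
    simp only [this]
    rw [← Finset.sum_div]
    congr 1
    rw [Finset.sum_ite, ← hFeq, ← hFne, ← hE]
    rw [Finset.sum_neg_distrib, ← hN]
    ring
  rw [hcorr]
  rw [div_le_div_iff₀ (by linarith) (by linarith)]
  nlinarith [hENbound, hNpos, hApos]

end
end
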